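/- For n ≥ 4, Cov(s_1 s_2, s_3 s_4) = 2n/((n−1)²(n−3)) − (6/((n−1)(n−2)(n−3)))·Var(s_1²). -/
import Mathlib


/-- Expectation of a real statistic of a uniformly distributed random permutation of
`{1,…,n}`: the average over the symmetric group. -/
noncomputable def permExp (n : ℕ) (f : Equiv.Perm (Fin n) → ℝ) : ℝ :=
  (∑ σ : Equiv.Perm (Fin n), f σ) / (Nat.factorial n : ℝ)

/-- Covariance of two real statistics of a uniform random permutation of `{1,…,n}`. -/
noncomputable def permCov (n : ℕ) (f g : Equiv.Perm (Fin n) → ℝ) : ℝ :=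
  permExp n fun σ => (f σ - permExp n f) * (g σ - permExp n g)

/-- Variance of a real statistic of a uniform random permutation of `{1,…,n}`. -/
noncomputable def permVar (n : ℕ) (f : Equiv.Perm (Fin n) → ℝ) : ℝ :=
  permCov n f f

/-- The standardized rank vector: `s i = √(12/(n²−1)) · (σ(i) − (n+1)/2)`, where the rank
`σ(i) ∈ {1,…,n}` is realized as `(σ i) + 1` for `σ i : Fin n`. -/
noncomputable def srv (n : ℕ) (σ : Equiv.Perm (Fin n)) (i : Fin n) : ℝ :=
  Real.sqrt (12 / ((n : ℝ) ^ 2 - 1)) * (((σ i : ℕ) : ℝ) + 1 - ((n : ℝ) + 1) / 2)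

open Finset


lemma sum_mulRight {n : ℕ} (π : Equiv.Perm (Fin n)) (F : Equiv.Perm (Fin n) → ℝ) :
    ∑ σ : Equiv.Perm (Fin n), F (σ * π) = ∑ σ : Equiv.Perm (Fin n), F σ :=
  Fintype.sum_equiv (Equiv.mulRight π) _ _ (fun _ => rfl)

lemma weight_expand {n : ℕ} (G : Equiv.Perm (Fin n) → ℝ) (w : Fin n → ℝ) :
    ∑ σ : Equiv.Perm (Fin n), G σ * (∑ j, w j)
      = ∑ i, ∑ σ : Equiv.Perm (Fin n), G σ * w (σ i) := by
  rw [Finset.sum_comm]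
  refine Finset.sum_congr rfl fun σ _ => ?_
  rw [← Finset.mul_sum, ← Equiv.sum_comp σ w]

lemma relabel1 {n : ℕ} (u : Fin n → ℝ) (x y : Fin n) :
    ∑ σ : Equiv.Perm (Fin n), u (σ x) = ∑ σ : Equiv.Perm (Fin n), u (σ y) := by
  rw [← sum_mulRight (Equiv.swap y x) (fun σ => u (σ y))]
  exact Finset.sum_congr rfl fun σ _ => by
    simp only [Equiv.Perm.mul_apply, Equiv.swap_apply_left]

lemma relabel2 {n : ℕ} (u v : Fin n → ℝ) {x y x' y' : Fin n} (π : Equiv.Perm (Fin n))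
    (hx : π x' = x) (hy : π y' = y) :
    ∑ σ : Equiv.Perm (Fin n), u (σ x) * v (σ y)
      = ∑ σ : Equiv.Perm (Fin n), u (σ x') * v (σ y') := by
  rw [← sum_mulRight π (fun σ => u (σ x') * v (σ y'))]
  exact Finset.sum_congr rfl fun σ _ => by
    simp only [Equiv.Perm.mul_apply, hx, hy]

lemma relabel3 {n : ℕ} (u v w : Fin n → ℝ) {x y z x' y' z' : Fin n} (π : Equiv.Perm (Fin n))
    (hx : π x' = x) (hy : π y' = y) (hz : π z' = z) :
    ∑ σ : Equiv.Perm (Fin n), u (σ x) * v (σ y) * w (σ z)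
      = ∑ σ : Equiv.Perm (Fin n), u (σ x') * v (σ y') * w (σ z') := by
  rw [← sum_mulRight π (fun σ => u (σ x') * v (σ y') * w (σ z'))]
  exact Finset.sum_congr rfl fun σ _ => by
    simp only [Equiv.Perm.mul_apply, hx, hy, hz]

lemma relabel4 {n : ℕ} (u v w t : Fin n → ℝ) {x y z r x' y' z' r' : Fin n}
    (π : Equiv.Perm (Fin n))
    (hx : π x' = x) (hy : π y' = y) (hz : π z' = z) (hr : π r' = r) :
    ∑ σ : Equiv.Perm (Fin n), u (σ x) * v (σ y) * w (σ z) * t (σ r)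
      = ∑ σ : Equiv.Perm (Fin n), u (σ x') * v (σ y') * w (σ z') * t (σ r') := by
  rw [← sum_mulRight π (fun σ => u (σ x') * v (σ y') * w (σ z') * t (σ r'))]
  exact Finset.sum_congr rfl fun σ _ => by
    simp only [Equiv.Perm.mul_apply, hx, hy, hz, hr]

lemma split1 {n : ℕ} (hn : 1 ≤ n) (T : Fin n → ℝ) (i0 : Fin n) (C : ℝ)
    (h : ∀ i, i ≠ i0 → T i = C) :
    ∑ i, T i = T i0 + ((n : ℝ) - 1) * C := by
  rw [← Finset.add_sum_erase Finset.univ T (Finset.mem_univ i0)]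
  congr 1
  rw [Finset.sum_congr rfl (fun i hi => h i (Finset.ne_of_mem_erase hi)),
    Finset.sum_const, Finset.card_erase_of_mem (Finset.mem_univ i0),
    Finset.card_univ, Fintype.card_fin, nsmul_eq_mul]
  rw [Nat.cast_sub hn, Nat.cast_one]

lemma split2 {n : ℕ} (hn : 2 ≤ n) (T : Fin n → ℝ) (i0 i1 : Fin n) (h01 : i0 ≠ i1) (C : ℝ)
    (h : ∀ i, i ≠ i0 → i ≠ i1 → T i = C) :
    ∑ i, T i = T i0 + (T i1 + ((n : ℝ) - 2) * C) := by
  have m1 : i1 ∈ Finset.univ.erase i0 := Finset.mem_erase.mpr ⟨h01.symm, Finset.mem_univ _⟩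
  rw [← Finset.add_sum_erase Finset.univ T (Finset.mem_univ i0),
    ← Finset.add_sum_erase _ T m1]
  congr 2
  rw [Finset.sum_congr rfl (fun i hi => h i
      (Finset.ne_of_mem_erase (Finset.mem_of_mem_erase hi)) (Finset.ne_of_mem_erase hi)),
    Finset.sum_const, Finset.card_erase_of_mem m1,
    Finset.card_erase_of_mem (Finset.mem_univ i0),
    Finset.card_univ, Fintype.card_fin, nsmul_eq_mul]
  have : n - 1 - 1 = n - 2 := by omega
  rw [this, Nat.cast_sub hn]
  norm_num

lemma split3 {n : ℕ} (hn : 3 ≤ n) (T : Fin n → ℝ) (i0 i1 i2 : Fin n)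
    (h01 : i0 ≠ i1) (h02 : i0 ≠ i2) (h12 : i1 ≠ i2) (C : ℝ)
    (h : ∀ i, i ≠ i0 → i ≠ i1 → i ≠ i2 → T i = C) :
    ∑ i, T i = T i0 + (T i1 + (T i2 + ((n : ℝ) - 3) * C)) := by
  have m1 : i1 ∈ Finset.univ.erase i0 := Finset.mem_erase.mpr ⟨h01.symm, Finset.mem_univ _⟩
  have m2 : i2 ∈ (Finset.univ.erase i0).erase i1 :=
    Finset.mem_erase.mpr ⟨h12.symm, Finset.mem_erase.mpr ⟨h02.symm, Finset.mem_univ _⟩⟩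
  rw [← Finset.add_sum_erase Finset.univ T (Finset.mem_univ i0),
    ← Finset.add_sum_erase _ T m1, ← Finset.add_sum_erase _ T m2]
  congr 3
  rw [Finset.sum_congr rfl (fun i hi => h i
      (Finset.ne_of_mem_erase (Finset.mem_of_mem_erase (Finset.mem_of_mem_erase hi)))
      (Finset.ne_of_mem_erase (Finset.mem_of_mem_erase hi))
      (Finset.ne_of_mem_erase hi)),
    Finset.sum_const, Finset.card_erase_of_mem m2, Finset.card_erase_of_mem m1,
    Finset.card_erase_of_mem (Finset.mem_univ i0),
    Finset.card_univ, Fintype.card_fin, nsmul_eq_mul]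
  have : n - 1 - 1 - 1 = n - 3 := by omega
  rw [this, Nat.cast_sub hn]
  norm_num

lemma sr1 (n : ℕ) : ∑ k ∈ Finset.range n, (k : ℝ) = n * (n - 1) / 2 := by
  induction n with
  | zero => simp
  | succ m ih => rw [Finset.sum_range_succ, ih]; push_cast; ring

lemma sr2 (n : ℕ) : ∑ k ∈ Finset.range n, (k : ℝ) ^ 2 = n * (n - 1) * (2 * n - 1) / 6 := by
  induction n with
  | zero => simp
  | succ m ih => rw [Finset.sum_range_succ, ih]; push_cast; ring

lemma sr3 (n : ℕ) : ∑ k ∈ Finset.range n, (k : ℝ) ^ 3 = (n * (n - 1) / 2) ^ 2 := by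
  induction n with
  | zero => simp
  | succ m ih => rw [Finset.sum_range_succ, ih]; push_cast; ring

-- the centered value function
noncomputable def aval (n : ℕ) (j : Fin n) : ℝ := ((j : ℕ) : ℝ) + 1 - ((n : ℝ) + 1) / 2

lemma sum_aval_pow (n : ℕ) (m : ℕ) :
    ∑ j : Fin n, aval n j ^ m = ∑ k ∈ Finset.range n, ((k : ℝ) - ((n : ℝ) - 1) / 2) ^ m := by
  unfold aval
  rw [Fin.sum_univ_eq_sum_range (fun k => (((k:ℕ):ℝ) + 1 - ((n:ℝ)+1)/2) ^ m)]
  exact Finset.sum_congr rfl fun k _ => by ring_nf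

lemma sum_aval1 (n : ℕ) : ∑ j : Fin n, aval n j = 0 := by
  have h := sum_aval_pow n 1
  simp only [pow_one] at h
  rw [h]
  have : ∀ k ∈ Finset.range n, ((k : ℝ) - ((n : ℝ) - 1) / 2)
      = (k : ℝ) - ((n : ℝ) - 1) / 2 := fun _ _ => rfl
  rw [Finset.sum_sub_distrib, sr1, Finset.sum_const, Finset.card_range]
  push_cast; ring

lemma sum_aval2 (n : ℕ) : ∑ j : Fin n, aval n j ^ 2 = n * ((n:ℝ)^2 - 1) / 12 := by
  rw [sum_aval_pow]
  have : ∀ k ∈ Finset.range n, ((k : ℝ) - ((n : ℝ) - 1) / 2) ^ 2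
      = (k:ℝ)^2 - ((n:ℝ)-1) * k + (((n:ℝ)-1)/2)^2 := fun k _ => by ring
  rw [Finset.sum_congr rfl this]
  rw [Finset.sum_add_distrib, Finset.sum_sub_distrib, sr2, ← Finset.mul_sum, sr1,
    Finset.sum_const, Finset.card_range]
  push_cast; ring

lemma sum_aval3 (n : ℕ) : ∑ j : Fin n, aval n j ^ 3 = 0 := by
  rw [sum_aval_pow]
  have : ∀ k ∈ Finset.range n, ((k : ℝ) - ((n : ℝ) - 1) / 2) ^ 3
      = (k:ℝ)^3 - 3*(((n:ℝ)-1)/2) * (k:ℝ)^2 + 3*(((n:ℝ)-1)/2)^2 * k - (((n:ℝ)-1)/2)^3 :=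
    fun k _ => by ring
  rw [Finset.sum_congr rfl this]
  rw [Finset.sum_sub_distrib, Finset.sum_add_distrib, Finset.sum_sub_distrib,
    ← Finset.mul_sum, ← Finset.mul_sum, sr1, sr2, sr3, Finset.sum_const, Finset.card_range]
  push_cast; ring

lemma permCov_eq (n : ℕ) (f g : Equiv.Perm (Fin n) → ℝ) :
    permCov n f g = permExp n (fun σ => f σ * g σ) - permExp n f * permExp n g := by
  have hK : ((n.factorial : ℝ)) ≠ 0 := Nat.cast_ne_zero.mpr n.factorial_ne_zero
  have hcard : (Finset.univ : Finset (Equiv.Perm (Fin n))).card = n.factorial := by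
    rw [Finset.card_univ, Fintype.card_perm, Fintype.card_fin]
  unfold permCov permExp
  have key : ∑ σ : Equiv.Perm (Fin n),
      (f σ - (∑ τ : Equiv.Perm (Fin n), f τ) / (n.factorial : ℝ))
        * (g σ - (∑ τ : Equiv.Perm (Fin n), g τ) / (n.factorial : ℝ))
      = ∑ σ : Equiv.Perm (Fin n), f σ * g σ
        - (∑ τ : Equiv.Perm (Fin n), f τ) * (∑ τ : Equiv.Perm (Fin n), g τ)
          / (n.factorial : ℝ) := by
    have expand : ∀ σ : Equiv.Perm (Fin n),
        (f σ - (∑ τ : Equiv.Perm (Fin n), f τ) / (n.factorial : ℝ))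
          * (g σ - (∑ τ : Equiv.Perm (Fin n), g τ) / (n.factorial : ℝ))
        = f σ * g σ - ((∑ τ : Equiv.Perm (Fin n), f τ) / (n.factorial : ℝ)) * g σ
          - ((∑ τ : Equiv.Perm (Fin n), g τ) / (n.factorial : ℝ)) * f σ
          + ((∑ τ : Equiv.Perm (Fin n), f τ) / (n.factorial : ℝ))
            * ((∑ τ : Equiv.Perm (Fin n), g τ) / (n.factorial : ℝ)) := fun σ => by ring
    rw [Finset.sum_congr rfl fun σ _ => expand σ]
    rw [Finset.sum_add_distrib, Finset.sum_sub_distrib, Finset.sum_sub_distrib,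
      ← Finset.mul_sum, ← Finset.mul_sum, Finset.sum_const, hcard, nsmul_eq_mul]
    field_simp
    ring
  rw [key, sub_div]
  congr 1
  rw [div_div]
  rw [div_mul_div_comm]

lemma mom1 {n : ℕ} (a : Fin n → ℝ) (u : Fin n → ℝ) (i0 : Fin n) :
    (n : ℝ) * ∑ σ : Equiv.Perm (Fin n), u (σ i0)
      = (n.factorial : ℝ) * ∑ j, u j := by
  have h := weight_expand (n := n) (fun _ => (1 : ℝ)) u
  simp only [one_mul] at h
  rw [Finset.sum_const, Finset.card_univ, Fintype.card_perm, Fintype.card_fin,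
    nsmul_eq_mul] at h
  rw [Finset.sum_congr rfl (fun i (_ : i ∈ Finset.univ) => relabel1 u i i0),
    Finset.sum_const, Finset.card_univ, Fintype.card_fin, nsmul_eq_mul] at h
  exact h.symm
set_option maxHeartbeats 2000000 in
lemma main_aux (n : ℕ) (hn : 4 ≤ n) (i0 i1 i2 i3 : Fin n)
    (h01 : i0 ≠ i1) (h02 : i0 ≠ i2) (h03 : i0 ≠ i3)
    (h12 : i1 ≠ i2) (h13 : i1 ≠ i3) (h23 : i2 ≠ i3) :
    permCov n (fun σ => srv n σ i0 * srv n σ i1) (fun σ => srv n σ i2 * srv n σ i3)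
      = 2 * (n : ℝ) / (((n : ℝ) - 1) ^ 2 * ((n : ℝ) - 3))
        - (6 / (((n : ℝ) - 1) * ((n : ℝ) - 2) * ((n : ℝ) - 3)))
            * permVar n (fun σ => (srv n σ i0) ^ 2) := by
  have hnR : (4 : ℝ) ≤ (n : ℝ) := by exact_mod_cast hn
  have hn0 : (n : ℝ) ≠ 0 := by linarith
  have hn1 : (n : ℝ) - 1 ≠ 0 := by linarith
  have hn2 : (n : ℝ) - 2 ≠ 0 := by linarith
  have hn3 : (n : ℝ) - 3 ≠ 0 := by linarith
  have hsqpos : (0 : ℝ) < (n : ℝ) ^ 2 - 1 := by nlinarith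
  have hsq : (n : ℝ) ^ 2 - 1 ≠ 0 := ne_of_gt hsqpos
  have hK : ((n.factorial : ℝ)) ≠ 0 := Nat.cast_ne_zero.mpr n.factorial_ne_zero
  have hc2 : Real.sqrt (12 / ((n : ℝ) ^ 2 - 1)) ^ 2 = 12 / ((n : ℝ) ^ 2 - 1) :=
    Real.sq_sqrt (by positivity)
  have hsrv : ∀ (σ : Equiv.Perm (Fin n)) (i : Fin n),
      srv n σ i = Real.sqrt (12 / ((n : ℝ) ^ 2 - 1)) * aval n (σ i) := fun _ _ => rfl
  have hp1 : ∑ j : Fin n, aval n j = 0 := sum_aval1 n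
  have hp2 : ∑ j : Fin n, aval n j ^ 2 = (n : ℝ) * ((n : ℝ) ^ 2 - 1) / 12 := sum_aval2 n
  -- first moments
  have m2 : (n : ℝ) * ∑ σ : Equiv.Perm (Fin n), aval n (σ i0) ^ 2
      = (n.factorial : ℝ) * ((n : ℝ) * ((n : ℝ) ^ 2 - 1) / 12) := by
    rw [← hp2]; exact mom1 (aval n) (fun t => aval n t ^ 2) i0
  have m4 : (n : ℝ) * ∑ σ : Equiv.Perm (Fin n), aval n (σ i0) ^ 4
      = (n.factorial : ℝ) * ∑ j : Fin n, aval n j ^ 4 :=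
    mom1 (aval n) (fun t => aval n t ^ 4) i0
  -- relation r3 : 0 = N2 + (n-1) N11
  have r3 : (0 : ℝ) = (∑ σ : Equiv.Perm (Fin n), aval n (σ i0) ^ 2)
      + ((n : ℝ) - 1) * (∑ σ : Equiv.Perm (Fin n), aval n (σ i0) * aval n (σ i1)) := by
    have h : ∑ σ : Equiv.Perm (Fin n), aval n (σ i0) * (∑ j : Fin n, aval n j)
        = ∑ i, ∑ σ : Equiv.Perm (Fin n), aval n (σ i0) * aval n (σ i) :=
      weight_expand _ _
    rw [hp1] at h
    simp only [mul_zero, Finset.sum_const_zero] at h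
    rw [split1 (by omega) (fun i => ∑ σ : Equiv.Perm (Fin n), aval n (σ i0) * aval n (σ i))
        i0 (∑ σ : Equiv.Perm (Fin n), aval n (σ i0) * aval n (σ i1)) ?_] at h
    · beta_reduce at h
      rw [show (∑ σ : Equiv.Perm (Fin n), aval n (σ i0) * aval n (σ i0))
          = ∑ σ : Equiv.Perm (Fin n), aval n (σ i0) ^ 2 from
        Finset.sum_congr rfl fun σ _ => by ring] at h
      exact h
    · intro i hi
      exact relabel2 (aval n) (aval n) (Equiv.swap i1 i)
        (Equiv.swap_apply_of_ne_of_ne h01 (Ne.symm hi)) (Equiv.swap_apply_left _ _)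
  -- relation r31 : 0 = N4s + (n-1) N31
  have r31 : (0 : ℝ) = (∑ σ : Equiv.Perm (Fin n), aval n (σ i0) ^ 4)
      + ((n : ℝ) - 1) * (∑ σ : Equiv.Perm (Fin n), aval n (σ i0) ^ 3 * aval n (σ i1)) := by
    have h : ∑ σ : Equiv.Perm (Fin n), aval n (σ i0) ^ 3 * (∑ j : Fin n, aval n j)
        = ∑ i, ∑ σ : Equiv.Perm (Fin n), aval n (σ i0) ^ 3 * aval n (σ i) :=
      weight_expand _ _
    rw [hp1] at h
    simp only [mul_zero, Finset.sum_const_zero] at h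
    rw [split1 (by omega) (fun i => ∑ σ : Equiv.Perm (Fin n), aval n (σ i0) ^ 3 * aval n (σ i))
        i0 (∑ σ : Equiv.Perm (Fin n), aval n (σ i0) ^ 3 * aval n (σ i1)) ?_] at h
    · beta_reduce at h
      rw [show (∑ σ : Equiv.Perm (Fin n), aval n (σ i0) ^ 3 * aval n (σ i0))
          = ∑ σ : Equiv.Perm (Fin n), aval n (σ i0) ^ 4 from
        Finset.sum_congr rfl fun σ _ => by ring] at h
      exact h
    · intro i hi
      exact relabel2 (fun t => aval n t ^ 3) (aval n) (Equiv.swap i1 i)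
        (Equiv.swap_apply_of_ne_of_ne h01 (Ne.symm hi)) (Equiv.swap_apply_left _ _)
  -- relation r22 : N2 * P = N4s + (n-1) N22
  have r22 : (∑ σ : Equiv.Perm (Fin n), aval n (σ i0) ^ 2) * ((n : ℝ) * ((n : ℝ) ^ 2 - 1) / 12)
      = (∑ σ : Equiv.Perm (Fin n), aval n (σ i0) ^ 4)
      + ((n : ℝ) - 1) * (∑ σ : Equiv.Perm (Fin n), aval n (σ i0) ^ 2 * aval n (σ i1) ^ 2) := by
    have h : ∑ σ : Equiv.Perm (Fin n), aval n (σ i0) ^ 2 * (∑ j : Fin n, aval n j ^ 2)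
        = ∑ i, ∑ σ : Equiv.Perm (Fin n), aval n (σ i0) ^ 2 * aval n (σ i) ^ 2 :=
      weight_expand _ _
    rw [hp2, ← Finset.sum_mul] at h
    rw [split1 (by omega) (fun i => ∑ σ : Equiv.Perm (Fin n), aval n (σ i0) ^ 2 * aval n (σ i) ^ 2)
        i0 (∑ σ : Equiv.Perm (Fin n), aval n (σ i0) ^ 2 * aval n (σ i1) ^ 2) ?_] at h
    · beta_reduce at h
      rw [show (∑ σ : Equiv.Perm (Fin n), aval n (σ i0) ^ 2 * aval n (σ i0) ^ 2)
          = ∑ σ : Equiv.Perm (Fin n), aval n (σ i0) ^ 4 from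
        Finset.sum_congr rfl fun σ _ => by ring] at h
      exact h
    · intro i hi
      exact relabel2 (fun t => aval n t ^ 2) (fun t => aval n t ^ 2) (Equiv.swap i1 i)
        (Equiv.swap_apply_of_ne_of_ne h01 (Ne.symm hi)) (Equiv.swap_apply_left _ _)
  -- relation r211 : 0 = N31 + (N22 + (n-2) N211)
  have r211 : (0 : ℝ) = (∑ σ : Equiv.Perm (Fin n), aval n (σ i0) ^ 3 * aval n (σ i1))
      + ((∑ σ : Equiv.Perm (Fin n), aval n (σ i0) ^ 2 * aval n (σ i1) ^ 2)
        + ((n : ℝ) - 2) * (∑ σ : Equiv.Perm (Fin n),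
            aval n (σ i0) ^ 2 * aval n (σ i1) * aval n (σ i2))) := by
    have h : ∑ σ : Equiv.Perm (Fin n), aval n (σ i0) ^ 2 * aval n (σ i1) * (∑ j : Fin n, aval n j)
        = ∑ i, ∑ σ : Equiv.Perm (Fin n), aval n (σ i0) ^ 2 * aval n (σ i1) * aval n (σ i) :=
      weight_expand _ _
    rw [hp1] at h
    simp only [mul_zero, Finset.sum_const_zero] at h
    rw [split2 (by omega)
        (fun i => ∑ σ : Equiv.Perm (Fin n), aval n (σ i0) ^ 2 * aval n (σ i1) * aval n (σ i))
        i0 i1 h01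
        (∑ σ : Equiv.Perm (Fin n), aval n (σ i0) ^ 2 * aval n (σ i1) * aval n (σ i2)) ?_] at h
    · beta_reduce at h
      rw [show (∑ σ : Equiv.Perm (Fin n), aval n (σ i0) ^ 2 * aval n (σ i1) * aval n (σ i0))
          = ∑ σ : Equiv.Perm (Fin n), aval n (σ i0) ^ 3 * aval n (σ i1) from
        Finset.sum_congr rfl fun σ _ => by ring] at h
      rw [show (∑ σ : Equiv.Perm (Fin n), aval n (σ i0) ^ 2 * aval n (σ i1) * aval n (σ i1))
          = ∑ σ : Equiv.Perm (Fin n), aval n (σ i0) ^ 2 * aval n (σ i1) ^ 2 from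
        Finset.sum_congr rfl fun σ _ => by ring] at h
      exact h
    · intro i hi0 hi1
      exact relabel3 (fun t => aval n t ^ 2) (aval n) (aval n) (Equiv.swap i2 i)
        (Equiv.swap_apply_of_ne_of_ne h02 (Ne.symm hi0))
        (Equiv.swap_apply_of_ne_of_ne h12 (Ne.symm hi1))
        (Equiv.swap_apply_left _ _)
  -- relation r4 : 0 = N211 + (N211 + (N211 + (n-3) N4))
  have r4 : (0 : ℝ)
      = (∑ σ : Equiv.Perm (Fin n), aval n (σ i0) ^ 2 * aval n (σ i1) * aval n (σ i2))
      + ((∑ σ : Equiv.Perm (Fin n), aval n (σ i0) ^ 2 * aval n (σ i1) * aval n (σ i2))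
        + ((∑ σ : Equiv.Perm (Fin n), aval n (σ i0) ^ 2 * aval n (σ i1) * aval n (σ i2))
          + ((n : ℝ) - 3) * (∑ σ : Equiv.Perm (Fin n),
              aval n (σ i0) * aval n (σ i1) * aval n (σ i2) * aval n (σ i3)))) := by
    have h : ∑ σ : Equiv.Perm (Fin n),
          aval n (σ i0) * aval n (σ i1) * aval n (σ i2) * (∑ j : Fin n, aval n j)
        = ∑ i, ∑ σ : Equiv.Perm (Fin n),
            aval n (σ i0) * aval n (σ i1) * aval n (σ i2) * aval n (σ i) :=
      weight_expand _ _
    rw [hp1] at h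
    simp only [mul_zero, Finset.sum_const_zero] at h
    rw [split3 (by omega)
        (fun i => ∑ σ : Equiv.Perm (Fin n),
          aval n (σ i0) * aval n (σ i1) * aval n (σ i2) * aval n (σ i))
        i0 i1 i2 h01 h02 h12
        (∑ σ : Equiv.Perm (Fin n),
          aval n (σ i0) * aval n (σ i1) * aval n (σ i2) * aval n (σ i3)) ?_] at h
    · beta_reduce at h
      rw [show (∑ σ : Equiv.Perm (Fin n),
            aval n (σ i0) * aval n (σ i1) * aval n (σ i2) * aval n (σ i0))
          = ∑ σ : Equiv.Perm (Fin n), aval n (σ i0) ^ 2 * aval n (σ i1) * aval n (σ i2) from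
        Finset.sum_congr rfl fun σ _ => by ring] at h
      rw [show (∑ σ : Equiv.Perm (Fin n),
            aval n (σ i0) * aval n (σ i1) * aval n (σ i2) * aval n (σ i1))
          = ∑ σ : Equiv.Perm (Fin n), aval n (σ i0) * aval n (σ i1) ^ 2 * aval n (σ i2) from
        Finset.sum_congr rfl fun σ _ => by ring] at h
      rw [show (∑ σ : Equiv.Perm (Fin n),
            aval n (σ i0) * aval n (σ i1) ^ 2 * aval n (σ i2))
          = ∑ σ : Equiv.Perm (Fin n), aval n (σ i1) * aval n (σ i0) ^ 2 * aval n (σ i2) from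
        relabel3 (aval n) (fun t => aval n t ^ 2) (aval n) (Equiv.swap i0 i1)
          (Equiv.swap_apply_right _ _) (Equiv.swap_apply_left _ _)
          (Equiv.swap_apply_of_ne_of_ne (Ne.symm h02) (Ne.symm h12))] at h
      rw [show (∑ σ : Equiv.Perm (Fin n),
            aval n (σ i1) * aval n (σ i0) ^ 2 * aval n (σ i2))
          = ∑ σ : Equiv.Perm (Fin n), aval n (σ i0) ^ 2 * aval n (σ i1) * aval n (σ i2) from
        Finset.sum_congr rfl fun σ _ => by ring] at h
      rw [show (∑ σ : Equiv.Perm (Fin n),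
            aval n (σ i0) * aval n (σ i1) * aval n (σ i2) * aval n (σ i2))
          = ∑ σ : Equiv.Perm (Fin n), aval n (σ i0) * aval n (σ i1) * aval n (σ i2) ^ 2 from
        Finset.sum_congr rfl fun σ _ => by ring] at h
      rw [show (∑ σ : Equiv.Perm (Fin n),
            aval n (σ i0) * aval n (σ i1) * aval n (σ i2) ^ 2)
          = ∑ σ : Equiv.Perm (Fin n), aval n (σ i2) * aval n (σ i1) * aval n (σ i0) ^ 2 from
        relabel3 (aval n) (aval n) (fun t => aval n t ^ 2) (Equiv.swap i0 i2)
          (Equiv.swap_apply_right _ _)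
          (Equiv.swap_apply_of_ne_of_ne (Ne.symm h01) h12)
          (Equiv.swap_apply_left _ _)] at h
      rw [show (∑ σ : Equiv.Perm (Fin n),
            aval n (σ i2) * aval n (σ i1) * aval n (σ i0) ^ 2)
          = ∑ σ : Equiv.Perm (Fin n), aval n (σ i0) ^ 2 * aval n (σ i1) * aval n (σ i2) from
        Finset.sum_congr rfl fun σ _ => by ring] at h
      exact h
    · intro i hi0 hi1 hi2
      exact relabel4 (aval n) (aval n) (aval n) (aval n) (Equiv.swap i3 i)
        (Equiv.swap_apply_of_ne_of_ne h03 (Ne.symm hi0))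
        (Equiv.swap_apply_of_ne_of_ne h13 (Ne.symm hi1))
        (Equiv.swap_apply_of_ne_of_ne h23 (Ne.symm hi2))
        (Equiv.swap_apply_left _ _)
  -- identify the (i2,i3) pair sum with the (i0,i1) pair sum
  have hgg : (∑ σ : Equiv.Perm (Fin n), aval n (σ i2) * aval n (σ i3))
      = ∑ σ : Equiv.Perm (Fin n), aval n (σ i0) * aval n (σ i1) := by
    refine relabel2 (aval n) (aval n) (Equiv.swap i0 i2 * Equiv.swap i1 i3) ?_ ?_
    · rw [Equiv.Perm.mul_apply, Equiv.swap_apply_of_ne_of_ne h01 h03,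
        Equiv.swap_apply_left]
    · rw [Equiv.Perm.mul_apply, Equiv.swap_apply_left,
        Equiv.swap_apply_of_ne_of_ne (Ne.symm h03) (Ne.symm h23)]
  -- expectations
  have hEfg : permExp n (fun σ => (srv n σ i0 * srv n σ i1) * (srv n σ i2 * srv n σ i3))
      = (12 / ((n : ℝ) ^ 2 - 1)) ^ 2
        * (∑ σ : Equiv.Perm (Fin n),
            aval n (σ i0) * aval n (σ i1) * aval n (σ i2) * aval n (σ i3))
        / (n.factorial : ℝ) := by
    unfold permExp
    rw [Finset.sum_congr rfl fun σ _ => show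
        (srv n σ i0 * srv n σ i1) * (srv n σ i2 * srv n σ i3)
        = (12 / ((n : ℝ) ^ 2 - 1)) ^ 2
          * (aval n (σ i0) * aval n (σ i1) * aval n (σ i2) * aval n (σ i3)) from by
      rw [hsrv, hsrv, hsrv, hsrv]
      linear_combination ((Real.sqrt (12 / ((n : ℝ) ^ 2 - 1)) ^ 2 + 12 / ((n : ℝ) ^ 2 - 1))
        * (aval n (σ i0) * aval n (σ i1) * aval n (σ i2) * aval n (σ i3))) * hc2]
    rw [← Finset.mul_sum]
  have hEf : permExp n (fun σ => srv n σ i0 * srv n σ i1)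
      = (12 / ((n : ℝ) ^ 2 - 1))
        * (∑ σ : Equiv.Perm (Fin n), aval n (σ i0) * aval n (σ i1)) / (n.factorial : ℝ) := by
    unfold permExp
    rw [Finset.sum_congr rfl fun σ _ => show
        srv n σ i0 * srv n σ i1
        = (12 / ((n : ℝ) ^ 2 - 1)) * (aval n (σ i0) * aval n (σ i1)) from by
      rw [hsrv, hsrv]
      linear_combination (aval n (σ i0) * aval n (σ i1)) * hc2]
    rw [← Finset.mul_sum]
  have hEg : permExp n (fun σ => srv n σ i2 * srv n σ i3)
      = (12 / ((n : ℝ) ^ 2 - 1))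
        * (∑ σ : Equiv.Perm (Fin n), aval n (σ i0) * aval n (σ i1)) / (n.factorial : ℝ) := by
    unfold permExp
    rw [Finset.sum_congr rfl fun σ _ => show
        srv n σ i2 * srv n σ i3
        = (12 / ((n : ℝ) ^ 2 - 1)) * (aval n (σ i2) * aval n (σ i3)) from by
      rw [hsrv, hsrv]
      linear_combination (aval n (σ i2) * aval n (σ i3)) * hc2]
    rw [← Finset.mul_sum, hgg]
  have hE2 : permExp n (fun σ => (srv n σ i0) ^ 2)
      = (12 / ((n : ℝ) ^ 2 - 1))
        * (∑ σ : Equiv.Perm (Fin n), aval n (σ i0) ^ 2) / (n.factorial : ℝ) := by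
    unfold permExp
    rw [Finset.sum_congr rfl fun σ _ => show
        (srv n σ i0) ^ 2 = (12 / ((n : ℝ) ^ 2 - 1)) * (aval n (σ i0) ^ 2) from by
      rw [hsrv]
      linear_combination (aval n (σ i0) ^ 2) * hc2]
    rw [← Finset.mul_sum]
  have hE4 : permExp n (fun σ => (srv n σ i0) ^ 2 * (srv n σ i0) ^ 2)
      = (12 / ((n : ℝ) ^ 2 - 1)) ^ 2
        * (∑ σ : Equiv.Perm (Fin n), aval n (σ i0) ^ 4) / (n.factorial : ℝ) := by
    unfold permExp
    rw [Finset.sum_congr rfl fun σ _ => show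
        (srv n σ i0) ^ 2 * (srv n σ i0) ^ 2
        = (12 / ((n : ℝ) ^ 2 - 1)) ^ 2 * (aval n (σ i0) ^ 4) from by
      rw [hsrv]
      linear_combination ((Real.sqrt (12 / ((n : ℝ) ^ 2 - 1)) ^ 2 + 12 / ((n : ℝ) ^ 2 - 1))
        * (aval n (σ i0) ^ 4)) * hc2]
    rw [← Finset.mul_sum]
  -- assemble
  rw [permCov_eq]
  unfold permVar
  rw [permCov_eq]
  beta_reduce
  rw [hEfg, hEf, hEg, hE4, hE2]
  -- solved forms
  have hA2 : (∑ σ : Equiv.Perm (Fin n), aval n (σ i0) ^ 2)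
      = (n.factorial : ℝ) * ((n : ℝ) * ((n : ℝ) ^ 2 - 1) / 12) / (n : ℝ) :=
    (eq_div_iff hn0).mpr (by linarith [m2])
  have hA4 : (∑ σ : Equiv.Perm (Fin n), aval n (σ i0) ^ 4)
      = (n.factorial : ℝ) * (∑ j : Fin n, aval n j ^ 4) / (n : ℝ) :=
    (eq_div_iff hn0).mpr (by linarith [m4])
  have hB11 : (∑ σ : Equiv.Perm (Fin n), aval n (σ i0) * aval n (σ i1))
      = (-(∑ σ : Equiv.Perm (Fin n), aval n (σ i0) ^ 2)) / ((n : ℝ) - 1) :=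
    (eq_div_iff hn1).mpr (by linarith [r3])
  have hB31 : (∑ σ : Equiv.Perm (Fin n), aval n (σ i0) ^ 3 * aval n (σ i1))
      = (-(∑ σ : Equiv.Perm (Fin n), aval n (σ i0) ^ 4)) / ((n : ℝ) - 1) :=
    (eq_div_iff hn1).mpr (by linarith [r31])
  have hB22 : (∑ σ : Equiv.Perm (Fin n), aval n (σ i0) ^ 2 * aval n (σ i1) ^ 2)
      = ((∑ σ : Equiv.Perm (Fin n), aval n (σ i0) ^ 2) * ((n : ℝ) * ((n : ℝ) ^ 2 - 1) / 12)
          - (∑ σ : Equiv.Perm (Fin n), aval n (σ i0) ^ 4)) / ((n : ℝ) - 1) :=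
    (eq_div_iff hn1).mpr (by linarith [r22])
  have hB211 : (∑ σ : Equiv.Perm (Fin n), aval n (σ i0) ^ 2 * aval n (σ i1) * aval n (σ i2))
      = (-((∑ σ : Equiv.Perm (Fin n), aval n (σ i0) ^ 3 * aval n (σ i1))
          + (∑ σ : Equiv.Perm (Fin n), aval n (σ i0) ^ 2 * aval n (σ i1) ^ 2)))
        / ((n : ℝ) - 2) :=
    (eq_div_iff hn2).mpr (by linarith [r211])
  have hB4 : (∑ σ : Equiv.Perm (Fin n),
        aval n (σ i0) * aval n (σ i1) * aval n (σ i2) * aval n (σ i3))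
      = (-(3 * (∑ σ : Equiv.Perm (Fin n),
          aval n (σ i0) ^ 2 * aval n (σ i1) * aval n (σ i2)))) / ((n : ℝ) - 3) :=
    (eq_div_iff hn3).mpr (by linarith [r4])
  rw [hB4, hB211, hB31, hB22, hB11, hA2, hA4]
  field_simp
  ring


/-- For `n ≥ 4`,
`Cov(s₁s₂, s₃s₄) = 2n/((n−1)²(n−3)) − (6/((n−1)(n−2)(n−3)))·Var(s₁²)`. -/
theorem cov_srv_prod_disjoint (n : ℕ) (hn : 4 ≤ n) :
    permCov n (fun σ => srv n σ ⟨0, by omega⟩ * srv n σ ⟨1, by omega⟩)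
        (fun σ => srv n σ ⟨2, by omega⟩ * srv n σ ⟨3, by omega⟩)
      = 2 * (n : ℝ) / (((n : ℝ) - 1) ^ 2 * ((n : ℝ) - 3))
        - (6 / (((n : ℝ) - 1) * ((n : ℝ) - 2) * ((n : ℝ) - 3)))
            * permVar n (fun σ => (srv n σ ⟨0, by omega⟩) ^ 2) := by
  exact main_aux n hn _ _ _ _
    (by simp [Fin.ext_iff]) (by simp [Fin.ext_iff]) (by simp [Fin.ext_iff])
    (by simp [Fin.ext_iff]) (by simp [Fin.ext_iff]) (by simp [Fin.ext_iff])
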